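/- Fix n ∈ {1,…,N} and a natural number β ≥ 1. Regard ρ(x) = 1 − Σ_{m=0}^N S_m(x)^β as a function of the n-th metric matrix D_n (all other data fixed). If D_nᵀ(x − x_n) ≠ 0, then this function is differentiable at D_n and its Fréchet derivative in the matrix direction H equals −β·[S_0(x)^{β−1}·S_0(x)·S_n(x) + Σ_{m=1}^N S_m(x)^{β−1}·S_m(x)·(S_n(x) − δ_{mn})]·(vᵀ H D_nᵀ v)/d_n(x, x_n), where v = x − x_n; equivalently the gradient matrix is −Σ_{m=0}^N β S_m^{β−1} ∂S_m/∂D_n with ∂S_m/∂D_n = S_m(S_n − δ_{mn}) d_n (X_n ⊗ X_n)D_n for m ≥ 1, ∂S_0/∂D_n = S_0 S_n d_n (X_n ⊗ X_n)D_n, and X_n = (x_n − x)/d_n(x, x_n). -/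

import Mathlib

open Matrix

/-- The anisotropic (Mahalanobis-type) length `sqrt(uᵀ A u)`. -/
noncomputable def mdist {d : ℕ} (A : Matrix (Fin d) (Fin d) ℝ) (u : Fin d → ℝ) : ℝ :=
  Real.sqrt (u ⬝ᵥ A.mulVec u)

/-- The denominator `ε_s + ∑_{k=1}^N exp(−d_k(x, x_k))` with `A_k = D_k D_kᵀ`. -/
noncomputable def Sden {d N : ℕ} (p : Fin N → Fin d → ℝ)
    (D : Fin N → Matrix (Fin d) (Fin d) ℝ) (ε : ℝ) (x : Fin d → ℝ) : ℝ :=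
  ε + ∑ k, Real.exp (-(mdist (D k * (D k)ᵀ) (x - p k)))

/-- `S_m(x) = exp(−d_m(x, x_m)) / (ε_s + ∑_k exp(−d_k(x, x_k)))` for `m = 1,…,N`. -/
noncomputable def S {d N : ℕ} (p : Fin N → Fin d → ℝ)
    (D : Fin N → Matrix (Fin d) (Fin d) ℝ) (ε : ℝ) (x : Fin d → ℝ) (m : Fin N) : ℝ :=
  Real.exp (-(mdist (D m * (D m)ᵀ) (x - p m))) / Sden p D ε x

/-- `S_0(x) = ε_s / (ε_s + ∑_k exp(−d_k(x, x_k)))`. -/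
noncomputable def S0 {d N : ℕ} (p : Fin N → Fin d → ℝ)
    (D : Fin N → Matrix (Fin d) (Fin d) ℝ) (ε : ℝ) (x : Fin d → ℝ) : ℝ :=
  ε / Sden p D ε x

/-- The density `ρ(x) = 1 − ∑_{m=0}^N S_m(x)^β`. -/
noncomputable def rho {d N : ℕ} (β : ℕ) (p : Fin N → Fin d → ℝ)
    (D : Fin N → Matrix (Fin d) (Fin d) ℝ) (ε : ℝ) (x : Fin d → ℝ) : ℝ :=
  1 - (S0 p D ε x ^ β + ∑ m, S p D ε x m ^ β)

/-! `ρ` depends on `D_n` only through the single distance `t = d_n(x, x_n)`, so it factors as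
`R ∘ d_n`, where `R(t)` is the density of the distance vector with its `n`-th entry replaced by `t`.
One-variable calculus on the Gibbs weights gives `∂_t S_m = S_m (S_n - δ_{mn})` and
`∂_t S_0 = S_0 S_n`. Since `d_n = |D_nᵀ v|`, it is differentiable wherever `D_nᵀ v ≠ 0`, with
derivative `H ↦ vᵀ H D_nᵀ v / d_n`; the chain rule combines the two. -/

open Matrix Real Function

section Gibbs

variable {ι : Type*}

lemma hasDerivAt_exp_neg_update [DecidableEq ι] (a : ι → ℝ) (n m : ι) (t : ℝ) :
    HasDerivAt (fun s => exp (-update a n s m)) (-(if m = n then exp (-t) else 0)) t := by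
  rcases eq_or_ne m n with rfl | hmn
  · simpa using (hasDerivAt_neg t).exp
  · simpa [update_of_ne hmn, hmn] using hasDerivAt_const t (exp (-a m))

variable [Fintype ι]

noncomputable def partitionFn (ε : ℝ) (a : ι → ℝ) : ℝ := ε + ∑ k, exp (-a k)

noncomputable def gibbsWeight (ε : ℝ) (a : ι → ℝ) (m : ι) : ℝ := exp (-a m) / partitionFn ε a

noncomputable def reservoirWeight (ε : ℝ) (a : ι → ℝ) : ℝ := ε / partitionFn ε a

noncomputable def gibbsDensity (β : ℕ) (ε : ℝ) (a : ι → ℝ) : ℝ :=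
  1 - (reservoirWeight ε a ^ β + ∑ m, gibbsWeight ε a m ^ β)

variable {ε : ℝ} {a : ι → ℝ}

lemma partitionFn_pos [Nonempty ι] (hε : 0 ≤ ε) : 0 < partitionFn ε a :=
  add_pos_of_nonneg_of_pos hε (Finset.sum_pos (fun _ _ => exp_pos _) Finset.univ_nonempty)

variable [DecidableEq ι]

lemma partitionFn_update (n : ι) (t : ℝ) :
    partitionFn ε (update a n t) = partitionFn ε a - exp (-a n) + exp (-t) := by
  have hmem := Finset.mem_univ n
  have hupd : (fun k => exp (-update a n t k)) = update (fun k => exp (-a k)) n (exp (-t)) :=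
    funext fun k => apply_update (fun _ s => exp (-s)) a n t k
  rw [partitionFn, partitionFn, hupd, Finset.sum_update_of_mem hmem,
    ← Finset.add_sum_erase _ _ hmem, Finset.sdiff_singleton_eq_erase]
  ring

lemma hasDerivAt_partitionFn_update (n : ι) (t : ℝ) :
    HasDerivAt (fun s => partitionFn ε (update a n s)) (-exp (-t)) t := by
  simp only [partitionFn_update]
  simpa using ((hasDerivAt_neg t).exp).const_add (partitionFn ε a - exp (-a n))

lemma hasDerivAt_gibbsWeight_update (hZ : partitionFn ε a ≠ 0) (n m : ι) :
    HasDerivAt (fun t => gibbsWeight ε (update a n t) m)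
      (gibbsWeight ε a m * (gibbsWeight ε a n - if m = n then 1 else 0)) (a n) := by
  have hZ' : partitionFn ε (update a n (a n)) ≠ 0 := by rwa [update_eq_self]
  refine ((hasDerivAt_exp_neg_update a n m (a n)).fun_div
    (hasDerivAt_partitionFn_update n (a n)) hZ').congr_deriv ?_
  simp only [update_eq_self, gibbsWeight]
  split_ifs with hmn
  · subst hmn; field_simp; ring
  · field_simp; ring

lemma hasDerivAt_reservoirWeight_update (hZ : partitionFn ε a ≠ 0) (n : ι) :
    HasDerivAt (fun t => reservoirWeight ε (update a n t))
      (reservoirWeight ε a * gibbsWeight ε a n) (a n) := by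
  have hZ' : partitionFn ε (update a n (a n)) ≠ 0 := by rwa [update_eq_self]
  refine ((hasDerivAt_const (a n) ε).fun_div
    (hasDerivAt_partitionFn_update n (a n)) hZ').congr_deriv ?_
  simp only [update_eq_self, reservoirWeight, gibbsWeight]
  field_simp; ring

lemma hasDerivAt_gibbsDensity_update (β : ℕ) (hZ : partitionFn ε a ≠ 0) (n : ι) :
    HasDerivAt (fun t => gibbsDensity β ε (update a n t))
      (-(β : ℝ) * (reservoirWeight ε a ^ (β - 1) * (reservoirWeight ε a * gibbsWeight ε a n) +
        ∑ m, gibbsWeight ε a m ^ (β - 1) *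
          (gibbsWeight ε a m * (gibbsWeight ε a n - if m = n then 1 else 0)))) (a n) := by
  have h0 := (hasDerivAt_reservoirWeight_update hZ n).pow β
  have hsum := HasDerivAt.fun_sum fun m (_ : m ∈ Finset.univ) =>
    (hasDerivAt_gibbsWeight_update hZ n m).pow β
  refine ((h0.add hsum).const_sub 1).congr_deriv ?_
  simp only [update_eq_self, neg_add, mul_add, Finset.mul_sum,
    ← Finset.sum_neg_distrib]
  congr 1
  · ring
  · exact Finset.sum_congr rfl fun _ _ => by ring

end Gibbs

section Gram

variable {m ι : Type*} [Fintype m] [Fintype ι]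

lemma dotProduct_mul_transpose_mulVec (v : m → ℝ) (A B : Matrix m ι ℝ) :
    v ⬝ᵥ (A * Bᵀ) *ᵥ v = (v ᵥ* A) ⬝ᵥ (v ᵥ* B) := by
  rw [← mulVec_mulVec, dotProduct_mulVec, mulVec_transpose]

lemma mdist_mul_transpose {d : ℕ} (v : Fin d → ℝ) (A : Matrix (Fin d) ι ℝ) :
    mdist (A * Aᵀ) v = √((v ᵥ* A) ⬝ᵥ (v ᵥ* A)) := by
  rw [mdist, dotProduct_mul_transpose_mulVec]

noncomputable def vecMulCLM (v : m → ℝ) : (m → ι → ℝ) →L[ℝ] ι → ℝ :=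
  LinearMap.toContinuousLinearMap (vecMulBilin ℝ ℝ v)

noncomputable def dotProductCLM : (ι → ℝ) →L[ℝ] (ι → ℝ) →L[ℝ] ℝ :=
  (dotProductBilin ℝ ℝ).toContinuousBilinearMap

@[simp] lemma vecMulCLM_apply (v : m → ℝ) (M : m → ι → ℝ) : vecMulCLM v M = v ᵥ* of M := rfl

@[simp] lemma dotProductCLM_apply (w u : ι → ℝ) : dotProductCLM w u = w ⬝ᵥ u := rfl

lemma HasFDerivAt.sqrt_dotProduct_self {E : Type*} [NormedAddCommGroup E] [NormedSpace ℝ E]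
    {f : E → ι → ℝ} {f' : E →L[ℝ] ι → ℝ} {x : E} (hf : HasFDerivAt f f' x) (hx : f x ≠ 0) :
    HasFDerivAt (fun y => √(f y ⬝ᵥ f y)) ((√(f x ⬝ᵥ f x))⁻¹ • (dotProductCLM (f x)).comp f') x := by
  have hsq := (dotProductCLM.hasFDerivAt_of_bilinear hf hf).sqrt
    (mt dotProduct_self_eq_zero.mp hx)
  refine hsq.congr_fderiv ?_
  ext h
  simp only [_root_.smul_apply, _root_.add_apply,
    ContinuousLinearMap.precompR_apply, ContinuousLinearMap.precompL_apply,
    ContinuousLinearMap.compL_apply, ContinuousLinearMap.comp_apply, dotProductCLM,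
    LinearMap.toContinuousBilinearMap_apply, dotProductBilin_apply_apply, smul_eq_mul,
    dotProduct_comm (f' h)]
  ring

lemma hasFDerivAt_mdist_mul_transpose {d : ℕ} (v : Fin d → ℝ) (M₀ : Matrix (Fin d) ι ℝ)
    (h : M₀ᵀ *ᵥ v ≠ 0) :
    HasFDerivAt (E := Fin d → ι → ℝ) (fun M => mdist (of M * (of M)ᵀ) v)
      ((mdist (M₀ * M₀ᵀ) v)⁻¹ • (dotProductCLM (v ᵥ* M₀)).comp (vecMulCLM v)) M₀ := by
  rw [mulVec_transpose] at h
  simp only [mdist_mul_transpose]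
  exact (vecMulCLM v).hasFDerivAt.sqrt_dotProduct_self h

end Gram

section Sites

variable {d N : ℕ}

noncomputable def siteDists (p : Fin N → Fin d → ℝ) (D : Fin N → Matrix (Fin d) (Fin d) ℝ)
    (x : Fin d → ℝ) (k : Fin N) : ℝ :=
  mdist (D k * (D k)ᵀ) (x - p k)

lemma S_eq_gibbsWeight (p : Fin N → Fin d → ℝ) (D : Fin N → Matrix (Fin d) (Fin d) ℝ) (ε : ℝ)
    (x : Fin d → ℝ) (m : Fin N) : S p D ε x m = gibbsWeight ε (siteDists p D x) m := rfl

lemma S0_eq_reservoirWeight (p : Fin N → Fin d → ℝ) (D : Fin N → Matrix (Fin d) (Fin d) ℝ)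
    (ε : ℝ) (x : Fin d → ℝ) : S0 p D ε x = reservoirWeight ε (siteDists p D x) := rfl

lemma siteDists_update (p : Fin N → Fin d → ℝ) (D : Fin N → Matrix (Fin d) (Fin d) ℝ)
    (x : Fin d → ℝ) (n : Fin N) (A : Matrix (Fin d) (Fin d) ℝ) :
    siteDists p (update D n A) x = update (siteDists p D x) n (mdist (A * Aᵀ) (x - p n)) := by
  funext k
  rcases eq_or_ne k n with rfl | hk
  · simp [siteDists]
  · simp [siteDists, update_of_ne hk]

lemma rho_update (β : ℕ) (p : Fin N → Fin d → ℝ) (D : Fin N → Matrix (Fin d) (Fin d) ℝ)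
    (ε : ℝ) (x : Fin d → ℝ) (n : Fin N) (A : Matrix (Fin d) (Fin d) ℝ) :
    rho β p (update D n A) ε x =
      gibbsDensity β ε (update (siteDists p D x) n (mdist (A * Aᵀ) (x - p n))) :=
  congrArg (gibbsDensity β ε) (siteDists_update p D x n A)

end Sites

theorem rho_differentiableAt_metric_general {d N : ℕ} (β : ℕ)
    (p : Fin N → Fin d → ℝ)
    (D : Fin N → Matrix (Fin d) (Fin d) ℝ)
    (ε : ℝ) (hε : 0 ≤ ε) (x : Fin d → ℝ) (n : Fin N)
    (h : (D n)ᵀ.mulVec (x - p n) ≠ 0) :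
    DifferentiableAt ℝ
        (fun M : Fin d → Fin d → ℝ =>
          rho β p (Function.update D n (Matrix.of M)) ε x) (D n) ∧
      ∀ H : Fin d → Fin d → ℝ,
        fderiv ℝ (fun M : Fin d → Fin d → ℝ =>
            rho β p (Function.update D n (Matrix.of M)) ε x) (D n) H =
          -(β : ℝ) *
            (S0 p D ε x ^ (β - 1) * (S0 p D ε x * S p D ε x n) +
              ∑ m, S p D ε x m ^ (β - 1) *
                (S p D ε x m * (S p D ε x n - if m = n then 1 else 0))) *
            ((x - p n) ⬝ᵥ (Matrix.of H * (D n)ᵀ).mulVec (x - p n)) /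
              mdist (D n * (D n)ᵀ) (x - p n) := by
  have : Nonempty (Fin N) := ⟨n⟩
  have hZ := (partitionFn_pos (a := siteDists p D x) hε).ne'
  have hρ := (hasDerivAt_gibbsDensity_update β hZ n).comp_hasFDerivAt (E := Fin d → Fin d → ℝ)
    (D n) (hasFDerivAt_mdist_mul_transpose (x - p n) (D n) h)
  simp only [Function.comp_def, ← rho_update] at hρ
  refine ⟨hρ.differentiableAt, fun H => ?_⟩
  rw [hρ.fderiv, dotProduct_mul_transpose_mulVec, dotProduct_comm]
  simp only [_root_.smul_apply, ContinuousLinearMap.comp_apply, smul_eq_mul, dotProductCLM_apply,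
    vecMulCLM_apply, S_eq_gibbsWeight, S0_eq_reservoirWeight]
  ring

/-- Regarding `ρ(x) = 1 − ∑_{m=0}^N S_m(x)^β` as a function of the `n`-th metric matrix
`D_n` (matrices encoded as `Fin d → Fin d → ℝ`, with the Frobenius pairing in the
direction `H`), if `D_nᵀ(x − x_n) ≠ 0` then it is differentiable at `D_n` and its
Fréchet derivative in the direction `H` equals
`−β·[S_0^{β−1}·S_0·S_n + ∑_{m=1}^N S_m^{β−1}·S_m·(S_n − δ_{mn})]·(vᵀ H D_nᵀ v)/d_n`,
where `v = x − x_n`. -/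
theorem rho_differentiableAt_metric {d N : ℕ} (β : ℕ) (hβ : 1 ≤ β)
    (p : Fin N → Fin d → ℝ)
    (D : Fin N → Matrix (Fin d) (Fin d) ℝ)
    (ε : ℝ) (hε : 0 ≤ ε) (x : Fin d → ℝ) (n : Fin N)
    (h : (D n)ᵀ.mulVec (x - p n) ≠ 0) :
    DifferentiableAt ℝ
        (fun M : Fin d → Fin d → ℝ =>
          rho β p (Function.update D n (Matrix.of M)) ε x) (D n) ∧
      ∀ H : Fin d → Fin d → ℝ,
        fderiv ℝ (fun M : Fin d → Fin d → ℝ =>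
            rho β p (Function.update D n (Matrix.of M)) ε x) (D n) H =
          -(β : ℝ) *
            (S0 p D ε x ^ (β - 1) * (S0 p D ε x * S p D ε x n) +
              ∑ m, S p D ε x m ^ (β - 1) *
                (S p D ε x m * (S p D ε x n - if m = n then 1 else 0))) *
            ((x - p n) ⬝ᵥ (Matrix.of H * (D n)ᵀ).mulVec (x - p n)) /
              mdist (D n * (D n)ᵀ) (x - p n) :=
  rho_differentiableAt_metric_general β p D ε hε x n h
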